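/- arXiv:1809.08384 — 3 statements merged into one kernel-verified Lean document; each statement's English description precedes it below -/
import Mathlib

section
/- For G : ℝ³ → ℝ², G(x,y,z) = (xy, z²), with D = G(Sing G) = ({0}×ℝ_{≥0}) ∪ (ℝ×{0}), the following condition holds: the intersection of the closure of M(G) ∖ G⁻¹(D) with V_G = G⁻¹(0) is contained in {0}, where M(G) = {x = ±y} ∪ {z = 0} is the set of points p where ∇ρ(p), ∇(xy)(p), ∇(z²)(p) are linearly dependent (ρ(p) = ‖p‖²). -/
/-- For `G(x,y,z) = (xy, z²)`, `D = G(Sing G) = ({0} × ℝ₊) ∪ (ℝ × {0})`, and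
`M(G) = {x = ±y} ∪ {z = 0}` the Milnor set, the condition
`closure (M(G) ∖ G⁻¹(D)) ∩ V_G ⊆ {0}` holds. -/
theorem condition_main_for_xy_z2 (G : EuclideanSpace ℝ (Fin 3) → ℝ × ℝ)
    (hGdef : ∀ v, G v = (v 0 * v 1, (v 2) ^ 2))
    (D : Set (ℝ × ℝ))
    (hD : D = ({p : ℝ × ℝ | p.1 = 0 ∧ 0 ≤ p.2} ∪ {p : ℝ × ℝ | p.2 = 0}))
    (M : Set (EuclideanSpace ℝ (Fin 3)))
    (hM : M = ({v | v 0 = v 1 ∨ v 0 = -(v 1)} ∪ {v | v 2 = 0})) :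
    closure (M \ G ⁻¹' D) ∩ G ⁻¹' {0} ⊆ {0} := by
  have hc0 : Continuous fun v : EuclideanSpace ℝ (Fin 3) => v 0 := PiLp.continuous_apply 2 _ 0
  have hc1 : Continuous fun v : EuclideanSpace ℝ (Fin 3) => v 1 := PiLp.continuous_apply 2 _ 1
  have hS : IsClosed {v : EuclideanSpace ℝ (Fin 3) | v 0 = v 1 ∨ v 0 = -(v 1)} := by
    have h1 : IsClosed {v : EuclideanSpace ℝ (Fin 3) | v 0 = v 1} := isClosed_eq hc0 hc1
    have h2 : IsClosed {v : EuclideanSpace ℝ (Fin 3) | v 0 = -(v 1)} :=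
      isClosed_eq hc0 hc1.neg
    exact h1.union h2
  have hsub : M \ G ⁻¹' D ⊆ {v : EuclideanSpace ℝ (Fin 3) | v 0 = v 1 ∨ v 0 = -(v 1)} := by
    rintro v ⟨hvM, hvD⟩
    rw [hM] at hvM
    rcases hvM with h | h
    · exact h
    · exfalso
      apply hvD
      rw [hD]
      simp only [Set.mem_preimage, Set.mem_union, Set.mem_setOf_eq, hGdef]
      right
      simpa using h
  intro p ⟨hp1, hp2⟩
  have hpS := (hS.closure_subset_iff.mpr hsub) hp1
  have hG : G p = 0 := hp2
  rw [hGdef] at hG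
  have hxy : p 0 * p 1 = 0 := congrArg Prod.fst hG
  have hz : (p 2) ^ 2 = 0 := congrArg Prod.snd hG
  have hz0 : p 2 = 0 := by nlinarith [sq_nonneg (p 2)]
  have h0 : p 0 = 0 ∧ p 1 = 0 := by
    rcases hpS with h | h <;> constructor <;> nlinarith
  have : p = 0 := by
    ext i
    fin_cases i
    · exact h0.1
    · exact h0.2
    · exact hz0
  exact this
end

section
/- Let G = (G₁,…,G_p) : ℝ^m → ℝ^p be C¹ and x a point with G₁(x) ≠ 0 and G a submersion at x. Then the normal space at x to the fiber of Ψ_G = G/‖G‖ through x (i.e., the orthogonal complement of ker DΨ_G(x)) is spanned by the vectors Ω_k(x) := G₁(x)∇G_k(x) − G_k(x)∇G₁(x) for k = 2,…,p. -/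
open InnerProductSpace Topology
open scoped RealInnerProductSpace

private lemma mem_orthogonal_span_iff' {E : Type*} [NormedAddCommGroup E]
    [InnerProductSpace ℝ E] (S : Set E) (v : E) :
    v ∈ (Submodule.span ℝ S)ᗮ ↔ ∀ u ∈ S, ⟪u, v⟫ = 0 := by
  rw [Submodule.mem_orthogonal]
  constructor
  · exact fun h u hu => h u (Submodule.subset_span hu)
  · intro h u hu
    induction hu using Submodule.span_induction with
    | mem u hu => exact h u hu
    | zero => simp
    | add u w _ _ hu hw => simp [inner_add_left, hu, hw]
    | smul c u _ hu => simp [inner_smul_left, hu]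

set_option maxHeartbeats 1000000 in
/-- At a submersion point `x` with `G₁(x) ≠ 0`, the normal space to the fiber of
`Ψ_G = G/‖G‖` through `x`, i.e. the orthogonal complement of `ker DΨ_G(x)`, is
spanned by the vectors `Ω_k = G₁∇G_k − G_k∇G₁`, `k = 2, …, p`. -/
theorem normal_space_of_sphere_map_fiber {m p : ℕ}
    (G : EuclideanSpace ℝ (Fin m) → EuclideanSpace ℝ (Fin (p + 1)))
    (hG : ContDiff ℝ 1 G)
    (x : EuclideanSpace ℝ (Fin m))
    (hG1 : G x 0 ≠ 0)
    (hsub : Function.Surjective (fderiv ℝ G x)) :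
    (LinearMap.ker (fderiv ℝ (fun y => ‖G y‖⁻¹ • G y) x).toLinearMap)ᗮ =
      Submodule.span ℝ
        (Set.range fun k : {k : Fin (p + 1) // k ≠ 0} =>
          G x 0 • gradient (fun y => G y k.1) x - G x k.1 • gradient (fun y => G y 0) x) := by
  classical
  set F := fderiv ℝ G x with hFdef
  have hGd : DifferentiableAt ℝ G x := (hG.differentiable one_ne_zero).differentiableAt
  have hGx : G x ≠ 0 := fun h => hG1 (by simp [h])
  have hr : ‖G x‖ ≠ 0 := norm_ne_zero_iff.mpr hGx
  set r : ℝ := ‖G x‖ with hrdef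
  -- differentiability of the inverse-norm factor
  have hnorm : DifferentiableAt ℝ (fun y => ‖G y‖) x := hGd.norm ℝ hGx
  have hinv : DifferentiableAt ℝ (fun y => ‖G y‖⁻¹) x := hnorm.inv hr
  set f : EuclideanSpace ℝ (Fin m) →L[ℝ] ℝ := fderiv ℝ (fun y => ‖G y‖⁻¹) x with hfdef
  set L : EuclideanSpace ℝ (Fin m) →L[ℝ] EuclideanSpace ℝ (Fin (p + 1)) :=
    r⁻¹ • F + f.smulRight (G x) with hLdef
  have hΨ : HasFDerivAt (fun y => ‖G y‖⁻¹ • G y) L x :=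
    hinv.hasFDerivAt.smul hGd.hasFDerivAt
  have hLv : ∀ v, L v = r⁻¹ • F v + f v • G x := by
    intro v
    simp [hLdef]
  -- derivative of coordinate functions
  have hcoord : ∀ k : Fin (p + 1), HasFDerivAt (fun y => G y k)
      ((EuclideanSpace.proj k).comp F) x := by
    intro k
    exact ((EuclideanSpace.proj k :
      EuclideanSpace ℝ (Fin (p + 1)) →L[ℝ] ℝ).hasFDerivAt).comp x hGd.hasFDerivAt
  have hgrad : ∀ (k : Fin (p + 1)) (v : EuclideanSpace ℝ (Fin m)),
      ⟪gradient (fun y => G y k) x, v⟫ = F v k := by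
    intro k v
    rw [gradient, (hcoord k).fderiv, toDual_symm_apply]
    rfl
  -- orthogonality: G x ⊥ range L
  have horth : ∀ v, ⟪G x, L v⟫ = 0 := by
    have hev : (fun y => ⟪(fun y => ‖G y‖⁻¹ • G y) y, (fun y => ‖G y‖⁻¹ • G y) y⟫)
        =ᶠ[nhds x] fun _ => (1 : ℝ) := by
      have hne : ∀ᶠ y in nhds x, G y ≠ 0 :=
        (hG.continuous.continuousAt).eventually_ne hGx
      filter_upwards [hne] with y hy
      have hny : ‖G y‖ ≠ 0 := norm_ne_zero_iff.mpr hy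
      rw [real_inner_self_eq_norm_sq, norm_smul]
      simp [abs_of_nonneg (inv_nonneg.mpr (norm_nonneg (G y))), inv_mul_cancel₀ hny]
    have hD : HasFDerivAt
        (fun y => ⟪(fun y => ‖G y‖⁻¹ • G y) y, (fun y => ‖G y‖⁻¹ • G y) y⟫)
        ((fderivInnerCLM ℝ ((‖G x‖⁻¹ • G x), (‖G x‖⁻¹ • G x))).comp (L.prod L)) x :=
      hΨ.inner ℝ hΨ
    have hzero : HasFDerivAt
        (fun y => ⟪(fun y => ‖G y‖⁻¹ • G y) y, (fun y => ‖G y‖⁻¹ • G y) y⟫)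
        (0 : EuclideanSpace ℝ (Fin m) →L[ℝ] ℝ) x :=
      (hasFDerivAt_const (1 : ℝ) x).congr_of_eventuallyEq hev
    have hDz := hD.unique hzero
    intro v
    have := congrArg (fun (T : EuclideanSpace ℝ (Fin m) →L[ℝ] ℝ) => T v) hDz
    simp only [ContinuousLinearMap.comp_apply, ContinuousLinearMap.prod_apply,
      fderivInnerCLM_apply, ContinuousLinearMap.zero_apply] at this
    rw [real_inner_comm (‖G x‖⁻¹ • G x) (L v)] at this
    have h3 : ⟪‖G x‖⁻¹ • G x, L v⟫ = 0 := by linarith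
    rw [real_inner_smul_left] at h3
    have hri : (‖G x‖⁻¹ : ℝ) ≠ 0 := inv_ne_zero hr
    exact (mul_eq_zero.mp h3).resolve_left hri
  -- the key kernel characterization
  have hker : LinearMap.ker (fderiv ℝ (fun y => ‖G y‖⁻¹ • G y) x).toLinearMap
      = (Submodule.span ℝ
        (Set.range fun k : {k : Fin (p + 1) // k ≠ 0} =>
          G x 0 • gradient (fun y => G y k.1) x
            - G x k.1 • gradient (fun y => G y 0) x))ᗮ := by
    ext v
    rw [LinearMap.mem_ker, mem_orthogonal_span_iff']
    have hfd : fderiv ℝ (fun y => ‖G y‖⁻¹ • G y) x = L := hΨ.fderiv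
    have hmem : (fderiv ℝ (fun y => ‖G y‖⁻¹ • G y) x).toLinearMap v = L v := by
      rw [hfd]; rfl
    rw [hmem]
    have hinner : ∀ k : {k : Fin (p + 1) // k ≠ 0},
        ⟪G x 0 • gradient (fun y => G y k.1) x - G x k.1 • gradient (fun y => G y 0) x, v⟫
          = G x 0 * F v k.1 - G x k.1 * F v 0 := by
      intro k
      rw [inner_sub_left, real_inner_smul_left, real_inner_smul_left, hgrad, hgrad]
    constructor
    · -- L v = 0 → all inner products vanish
      intro hLv0 u hu
      obtain ⟨k, rfl⟩ := hu
      rw [hinner]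
      have hFv : F v = (-(r * f v)) • G x := by
        have h1 : r⁻¹ • F v + f v • G x = 0 := by rw [← hLv v, hLv0]
        have h2 : r⁻¹ • F v = -(f v • G x) := by
          rw [eq_neg_iff_add_eq_zero]; exact h1
        have h3 : F v = r • (-(f v • G x)) := by
          rw [← h2, smul_smul, mul_inv_cancel₀ hr, one_smul]
        rw [h3, smul_neg, smul_smul, ← neg_smul]
      have hFk : ∀ j : Fin (p + 1), F v j = (-(r * f v)) * G x j := by
        intro j
        rw [hFv]; rfl
      rw [hFk, hFk]
      ring
    · -- all inner products vanish → L v = 0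
      intro h
      have hcond : ∀ k : {k : Fin (p + 1) // k ≠ 0},
          G x 0 * F v k.1 - G x k.1 * F v 0 = 0 := by
        intro k
        rw [← hinner]
        exact h _ ⟨k, rfl⟩
      set c : ℝ := F v 0 / G x 0 with hcdef
      have hFv : F v = c • G x := by
        apply PiLp.ext
        intro j
        have hsj : (c • G x) j = c * G x j := rfl
        rw [hsj]
        by_cases hj : j = 0
        · subst hj
          rw [hcdef, div_mul_cancel₀ _ hG1]
        · have hc := hcond ⟨j, hj⟩
          rw [hcdef, div_mul_eq_mul_div, eq_comm, div_eq_iff hG1]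
          linear_combination -hc
      have hLvc : L v = (r⁻¹ * c + f v) • G x := by
        rw [hLv, hFv, smul_smul, add_smul]
      have := horth v
      rw [hLvc, real_inner_smul_right, real_inner_self_eq_norm_sq] at this
      have hsc : r⁻¹ * c + f v = 0 := by
        have hGn : ‖G x‖ * ‖G x‖ ≠ 0 := mul_ne_zero hr hr
        have := mul_eq_zero.mp this
        rcases this with h' | h'
        · exact h'
        · exact absurd h' (by positivity)
      rw [hLvc, hsc, zero_smul]
  rw [hker, Submodule.orthogonal_orthogonal]
end

section
/- Let G : ℝ^m → ℝ^p be C¹, x a point where G is a submersion, G(x) ≠ 0, and set X_y = Ψ_G⁻¹(y) the fiber of Ψ_G = G/‖G‖ through x. Define v₁(x) := proj_{T_xX_y}(∇‖G‖²(x)) and v₂(x) := proj_{T_xX_y}(∇ρ(x)) where ρ(x)=‖x‖². Then v₁(x) and v₂(x) are linearly dependent if and only if x belongs to the Milnor set M(G), i.e., if and only if ∇ρ(x) is a linear combination of ∇G₁(x),…,∇G_p(x). -/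
open RealInnerProductSpace

set_option maxHeartbeats 1000000 in
/-- Let `x` be a submersion point of `G` with `G(x) ≠ 0`, let `T = ker DΨ_G(x)`
be the tangent space at `x` of the fiber of `Ψ_G = G/‖G‖`, and let
`v₁ = proj_T ∇‖G‖²(x)`, `v₂ = proj_T ∇ρ(x)`.  Then `v₁, v₂` are linearly
dependent iff `x ∈ M(G)`, i.e. iff `∇ρ(x) ∈ span{∇G₁(x), …, ∇G_p(x)}`. -/
theorem projections_dependent_iff_milnor_set {m p : ℕ}
    (G : EuclideanSpace ℝ (Fin m) → EuclideanSpace ℝ (Fin p))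
    (hG : ContDiff ℝ 1 G)
    (x : EuclideanSpace ℝ (Fin m))
    (hGx : G x ≠ 0)
    (hsub : Function.Surjective (fderiv ℝ G x))
    (T : Submodule ℝ (EuclideanSpace ℝ (Fin m)))
    (hT : T = LinearMap.ker (fderiv ℝ (fun y => ‖G y‖⁻¹ • G y) x).toLinearMap)
    (v₁ v₂ : EuclideanSpace ℝ (Fin m))
    (hv₁ : v₁ = Submodule.orthogonalProjection T (gradient (fun y => ‖G y‖ ^ 2) x))
    (hv₂ : v₂ = Submodule.orthogonalProjection T
      (gradient (fun y : EuclideanSpace ℝ (Fin m) => ‖y‖ ^ 2) x)) :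
    ¬ LinearIndependent ℝ ![v₁, v₂] ↔
      gradient (fun y : EuclideanSpace ℝ (Fin m) => ‖y‖ ^ 2) x ∈
        Submodule.span ℝ (Set.range fun k : Fin p => gradient (fun y => G y k) x) := by
  classical
  have hGd : DifferentiableAt ℝ G x := (hG.differentiable one_ne_zero).differentiableAt
  set D := fderiv ℝ G x with hD
  set A := ContinuousLinearMap.adjoint D with hA
  set R := LinearMap.range A.toLinearMap with hR
  set g := G x with hg
  have hr : (0:ℝ) < ‖g‖ := norm_pos_iff.mpr hGx
  have hr0 : ‖g‖ ≠ 0 := ne_of_gt hr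
  -- gradients
  have hgradρ : gradient (fun y : EuclideanSpace ℝ (Fin m) => ‖y‖ ^ 2) x = (2:ℝ) • x := by
    refine HasGradientAt.gradient ?_
    rw [hasGradientAt_iff_hasFDerivAt]
    refine HasFDerivAt.congr_fderiv ((hasStrictFDerivAt_norm_sq x).hasFDerivAt) ?_
    ext v
    simp [real_inner_smul_left, two_smul]
  have hgrad1 : gradient (fun y => ‖G y‖ ^ 2) x = A ((2:ℝ) • g) := by
    refine HasGradientAt.gradient ?_
    rw [hasGradientAt_iff_hasFDerivAt]
    refine HasFDerivAt.congr_fderiv (hGd.hasFDerivAt.norm_sq) ?_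
    ext v
    simp [hA, ContinuousLinearMap.adjoint_inner_left, real_inner_smul_left, two_smul]
    rfl
  have hgradk : ∀ k : Fin p, gradient (fun y => G y k) x
      = A (EuclideanSpace.single k 1) := by
    intro k
    refine HasGradientAt.gradient ?_
    rw [hasGradientAt_iff_hasFDerivAt]
    have h : HasFDerivAt (⇑(EuclideanSpace.proj (𝕜 := ℝ) k) ∘ G)
        ((EuclideanSpace.proj k).comp D) x :=
      ((EuclideanSpace.proj k).hasFDerivAt).comp x hGd.hasFDerivAt
    have h2 : HasFDerivAt (fun y => G y k) ((EuclideanSpace.proj k).comp D) x := h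
    refine HasFDerivAt.congr_fderiv (h2) ?_
    ext v
    simp [hA, ContinuousLinearMap.adjoint_inner_left, EuclideanSpace.inner_single_left]
  -- kernel and range relations
  have hker : LinearMap.ker D.toLinearMap = Rᗮ := by
    ext v
    simp only [LinearMap.mem_ker, Submodule.mem_orthogonal, ContinuousLinearMap.coe_coe]
    constructor
    · rintro h u hu
      obtain ⟨w, rfl⟩ := hu
      rw [ContinuousLinearMap.coe_coe, ContinuousLinearMap.adjoint_inner_left, h, inner_zero_right]
    · intro h
      have h2 : ⟪D v, D v⟫ = 0 := by
        have := h (A (D v)) ⟨D v, rfl⟩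
        rwa [ContinuousLinearMap.adjoint_inner_left] at this
      exact inner_self_eq_zero.mp h2
  have horth : (LinearMap.ker D.toLinearMap)ᗮ = R := by
    rw [hker, Submodule.orthogonal_orthogonal]
  -- the span of the gradients is R
  have hW : Submodule.span ℝ
      (Set.range fun k : Fin p => gradient (fun y => G y k) x) = R := by
    have hfun : (fun k : Fin p => gradient (fun y => G y k) x)
        = ⇑A ∘ (fun k : Fin p => EuclideanSpace.single k (1:ℝ)) := by
      funext k; exact hgradk k
    have h1 : (Set.range fun k : Fin p => gradient (fun y => G y k) x)
        = ⇑A '' Set.range (fun k : Fin p => EuclideanSpace.single k (1:ℝ)) := by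
      rw [hfun, Set.range_comp]
    have hfe : (fun k : Fin p => EuclideanSpace.single k (1:ℝ))
        = ⇑(EuclideanSpace.basisFun (Fin p) ℝ).toBasis := by
      funext k; rw [OrthonormalBasis.coe_toBasis, EuclideanSpace.basisFun_apply]
    have h2 : Submodule.span ℝ
        (Set.range fun k : Fin p => EuclideanSpace.single k (1:ℝ)) = ⊤ := by
      rw [hfe]; exact (EuclideanSpace.basisFun (Fin p) ℝ).toBasis.span_eq
    rw [h1, ← ContinuousLinearMap.coe_coe, Submodule.span_image, h2, Submodule.map_top]
  -- membership characterization of T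
  have hTmem : ∀ v, v ∈ T ↔ ∃ t : ℝ, D v = t • g := by
    set n' := (2:ℕ) • (innerSL ℝ g).comp D with hn'
    have hnsq : HasFDerivAt (fun y => ‖G y‖ ^ 2) n' x := hGd.hasFDerivAt.norm_sq
    set c₀ := -(1 / (2 * ‖g‖)) / ‖g‖ ^ 2 with hc₀
    have hsqrt : Real.sqrt (‖g‖ ^ 2) = ‖g‖ := Real.sqrt_sq (norm_nonneg g)
    have hinv : HasDerivAt (fun t : ℝ => (Real.sqrt t)⁻¹) c₀ (‖g‖ ^ 2) := by
      have h1 := Real.hasDerivAt_sqrt (x := ‖g‖ ^ 2) (by positivity)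
      have h2 := h1.inv (by rw [hsqrt]; exact hr0)
      rw [hsqrt] at h2
      exact h2
    have hcinv : HasFDerivAt (fun y => ‖G y‖⁻¹) (c₀ • n') x := by
      have h := hinv.comp_hasFDerivAt x hnsq
      have hfun : (fun y => ‖G y‖⁻¹)
          = (fun t : ℝ => (Real.sqrt t)⁻¹) ∘ (fun y => ‖G y‖ ^ 2) := by
        funext y; simp [Function.comp, Real.sqrt_sq (norm_nonneg _)]
      rw [hfun]; exact h
    have hΨ : HasFDerivAt (fun y => ‖G y‖⁻¹ • G y)
        (‖g‖⁻¹ • D + (c₀ • n').smulRight g) x := hcinv.smul hGd.hasFDerivAt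
    intro v
    rw [hT, LinearMap.mem_ker]
    have hcoe : (fderiv ℝ (fun y => ‖G y‖⁻¹ • G y) x).toLinearMap v
        = ‖g‖⁻¹ • D v + (c₀ * (2 * ⟪g, D v⟫)) • g := by
      have : (fderiv ℝ (fun y => ‖G y‖⁻¹ • G y) x).toLinearMap v
          = (‖g‖⁻¹ • D + (c₀ • n').smulRight g) v := by
        rw [hΨ.fderiv]; rfl
      rw [this]
      simp [n', two_smul, mul_comm]
      module
    rw [hcoe]
    constructor
    · intro h0
      refine ⟨-(‖g‖ * (c₀ * (2 * ⟪g, D v⟫))), ?_⟩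
      have h1 : ‖g‖⁻¹ • D v = -((c₀ * (2 * ⟪g, D v⟫)) • g) := by
        rw [add_eq_zero_iff_eq_neg] at h0; exact h0
      calc D v = ‖g‖ • (‖g‖⁻¹ • D v) := by
            rw [smul_smul, mul_inv_cancel₀ hr0, one_smul]
        _ = -(‖g‖ * (c₀ * (2 * ⟪g, D v⟫))) • g := by
            rw [h1, smul_neg, smul_smul, neg_smul]
    · rintro ⟨t, ht⟩
      rw [ht, real_inner_smul_right, real_inner_self_eq_norm_sq, smul_smul]
      rw [← add_smul]
      convert zero_smul ℝ g using 2
      rw [hc₀]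
      field_simp
      ring
  -- basic membership facts
  obtain ⟨v₀, hv₀⟩ := hsub g
  have hv₀T : v₀ ∈ T := (hTmem v₀).mpr ⟨1, by rw [hv₀, one_smul]⟩
  have hkerT : LinearMap.ker D.toLinearMap ≤ T := by
    intro v hv
    rw [LinearMap.mem_ker, ContinuousLinearMap.coe_coe] at hv
    exact (hTmem v).mpr ⟨0, by rw [hv, zero_smul]⟩
  have hTorth : Tᗮ ≤ R := by
    rw [← horth]
    exact Submodule.orthogonal_le hkerT
  set u₁ := gradient (fun y => ‖G y‖ ^ 2) x with hu₁
  set u₂ := gradient (fun y : EuclideanSpace ℝ (Fin m) => ‖y‖ ^ 2) x with hu₂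
  have hu₁R : u₁ ∈ R := by rw [hgrad1]; exact ⟨(2:ℝ) • g, rfl⟩
  have hsub1 : u₁ - v₁ ∈ R := hTorth (by
    rw [hv₁]; exact Submodule.sub_starProjection_mem_orthogonal u₁)
  have hv₁R : v₁ ∈ R := by
    have h := R.sub_mem hu₁R hsub1
    simpa using h
  have hsub2 : u₂ - v₂ ∈ R := hTorth (by
    rw [hv₂]; exact Submodule.sub_starProjection_mem_orthogonal u₂)
  have hv₁T : v₁ ∈ T := by rw [hv₁]; exact (Submodule.orthogonalProjection T u₁).2
  have hv₂T : v₂ ∈ T := by rw [hv₂]; exact (Submodule.orthogonalProjection T u₂).2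
  -- v₁ ≠ 0
  have hv₁ne : v₁ ≠ 0 := by
    intro h0
    have hm : u₁ - v₁ ∈ Tᗮ := by
      rw [hv₁]; exact Submodule.sub_starProjection_mem_orthogonal u₁
    have h1 : ⟪v₀, u₁ - v₁⟫ = 0 := hm v₀ hv₀T
    rw [h0, sub_zero] at h1
    have h2 : ⟪v₀, u₁⟫ = 2 * ‖g‖ ^ 2 := by
      rw [hgrad1, real_inner_comm, ContinuousLinearMap.adjoint_inner_left, hv₀,
        real_inner_smul_left, real_inner_self_eq_norm_sq]
    rw [h1] at h2
    have : (2:ℝ) * ‖g‖ ^ 2 > 0 := by positivity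
    rw [← h2] at this
    exact lt_irrefl _ this
  -- key: T ∩ R lies on a line
  set z := (Submodule.orthogonalProjection R v₀ : EuclideanSpace ℝ (Fin m)) with hz
  have hkey : ∀ w, w ∈ T → w ∈ R → ∃ t : ℝ, w = t • z := by
    intro w hwT hwR
    obtain ⟨t, ht⟩ := (hTmem w).mp hwT
    refine ⟨t, ?_⟩
    have h1 : t • v₀ - w ∈ Rᗮ := by
      rw [← hker, LinearMap.mem_ker, ContinuousLinearMap.coe_coe, map_sub, map_smul, hv₀, ht, sub_self]
    have h2 : (Submodule.orthogonalProjection R (t • v₀) : EuclideanSpace ℝ (Fin m)) = w :=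
      Submodule.eq_starProjection_of_mem_orthogonal hwR h1
    rw [← h2, map_smul, hz, Submodule.coe_smul]
  rw [hW]
  constructor
  · intro hnli
    rw [linearIndependent_fin2] at hnli
    push_neg at hnli
    simp only [Matrix.cons_val_one, Matrix.head_cons, Matrix.cons_val_zero] at hnli
    by_cases h0 : v₂ = 0
    · rw [show u₂ = (u₂ - v₂) + v₂ from (sub_add_cancel u₂ v₂).symm]
      exact R.add_mem hsub2 (h0 ▸ R.zero_mem)
    · obtain ⟨a, ha⟩ := hnli h0
      have ha0 : a ≠ 0 := by
        rintro rfl; rw [zero_smul] at ha; exact hv₁ne ha.symm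
      have hv₂R : v₂ ∈ R := by
        have hv₂eq : v₂ = a⁻¹ • v₁ := by
          rw [← ha, smul_smul, inv_mul_cancel₀ ha0, one_smul]
        rw [hv₂eq]
        exact R.smul_mem _ hv₁R
      rw [show u₂ = (u₂ - v₂) + v₂ from (sub_add_cancel u₂ v₂).symm]
      exact R.add_mem hsub2 hv₂R
  · intro hu₂R
    have hv₂R : v₂ ∈ R := by
      have : v₂ = u₂ - (u₂ - v₂) := by abel
      rw [this]
      exact R.sub_mem hu₂R hsub2
    obtain ⟨t₁, ht₁⟩ := hkey v₁ hv₁T hv₁R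
    obtain ⟨t₂, ht₂⟩ := hkey v₂ hv₂T hv₂R
    rw [linearIndependent_fin2]
    push_neg
    simp only [Matrix.cons_val_one, Matrix.head_cons, Matrix.cons_val_zero]
    intro h0
    have ht₂0 : t₂ ≠ 0 := by
      rintro rfl; rw [zero_smul] at ht₂; exact h0 ht₂
    exact ⟨t₁ / t₂, by rw [ht₂, smul_smul, div_mul_cancel₀ _ ht₂0, ht₁]⟩
end
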